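/- arXiv:1905.08514 — 7 statements merged into one kernel-verified Lean document; each statement's English description precedes it below -/
import Mathlib

section
/- Let n ≥ 1, let 0 ≤ j ≤ n, and let μ = (λ₂ ≥ λ₃ ≥ …) be a partition of j with λ₂ ≤ n − j, so that λ = (n−j, λ₂, λ₃, …) is a partition of n. Then d_λ ≤ C(n,j) · d_μ, where C(n,j) is the binomial coefficient. -/
/-! A standard tableau `T` of shape `λ` is determined by the set `S` of entries lying below the
first row, an `|λ*|`-subset of `{1, …, |λ|}`, together with the standardization of `T` restricted
to those rows, a standard tableau of shape `λ*`: the first row, being increasing, must carry the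
complement of `S` in increasing order. This injection gives `d_λ ≤ C(|λ|, |λ*|) · d_{λ*}`. -/

noncomputable def sytCard (μ : YoungDiagram) : ℕ :=
  Nat.card {f : {c // c ∈ μ.cells} → Fin μ.card //
    Function.Bijective f ∧
    (∀ a b : {c // c ∈ μ.cells}, a.1.1 = b.1.1 → a.1.2 < b.1.2 → f a < f b) ∧
    (∀ a b : {c // c ∈ μ.cells}, a.1.2 = b.1.2 → a.1.1 < b.1.1 → f a < f b)}

noncomputable def Nat.Partition.toYD {n : ℕ} (p : n.Partition) : YoungDiagram :=
  YoungDiagram.ofRowLens (p.parts.sort (· ≥ ·)) (List.Pairwise.sortedGE (Multiset.pairwise_sort _ _))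

/-- The dimension `d_λ` of the irreducible representation of `S_n` indexed by the
partition `λ` of `n`, i.e. the number of standard Young tableaux of shape `λ`. -/
noncomputable def dPart {n : ℕ} (p : n.Partition) : ℕ := sytCard p.toYD

open Finset

namespace YoungDiagram

noncomputable def tail (μ : YoungDiagram) : YoungDiagram where
  cells := μ.cells.preimage (Prod.map (· + 1) id)
    ((add_left_injective 1).prodMap Function.injective_id).injOn
  isLowerSet _ _ hle hb := by
    rw [coe_preimage] at hb ⊢
    exact μ.isLowerSet ((monotone_id.add_const 1).prodMap monotone_id hle) hb

@[simp]
theorem mem_tail {μ : YoungDiagram} {c : ℕ × ℕ} : c ∈ μ.tail ↔ (c.1 + 1, c.2) ∈ μ := by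
  rw [← mem_cells, tail, mem_preimage, mem_cells, Prod.map]; rfl

theorem card_cellsOfRowLens (w : List ℕ) : (YoungDiagram.cellsOfRowLens w).card = w.sum := by
  induction w with
  | nil => rfl
  | cons a w ih =>
    rw [YoungDiagram.cellsOfRowLens, card_union_of_disjoint, card_map, ih]
    · simp
    · simp only [disjoint_left, mem_product, mem_singleton, mem_map]
      rintro _ ⟨h, -⟩ ⟨_, -, rfl⟩
      simp at h

end YoungDiagram

namespace Nat.Partition

open YoungDiagram

theorem card_toYD {n : ℕ} (p : n.Partition) : p.toYD.card = n := by
  rw [YoungDiagram.card, toYD, ofRowLens, card_cellsOfRowLens, ← Multiset.sum_coe,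
    Multiset.sort_eq, p.parts_sum]

theorem tail_toYD_of_parts_eq_cons {n j a : ℕ} {lam : n.Partition} {μ : j.Partition}
    (ha : ∀ x ∈ μ.parts, x ≤ a) (h : lam.parts = a ::ₘ μ.parts) : lam.toYD.tail = μ.toYD := by
  ext ⟨i, k⟩
  simp only [mem_cells, mem_tail, toYD, mem_ofRowLens, h, Multiset.sort_cons a μ.parts (· ≥ ·) ha]
  simp

end Nat.Partition

noncomputable section

abbrev StandardYoungTableau (μ : YoungDiagram) : Type :=
  {f : {c // c ∈ μ.cells} → Fin μ.card //
    Function.Bijective f ∧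
    (∀ a b : {c // c ∈ μ.cells}, a.1.1 = b.1.1 → a.1.2 < b.1.2 → f a < f b) ∧
    (∀ a b : {c // c ∈ μ.cells}, a.1.2 = b.1.2 → a.1.1 < b.1.1 → f a < f b)}

namespace StandardYoungTableau

variable {μ : YoungDiagram}

def shiftCell (c : {c // c ∈ μ.tail.cells}) : {c // c ∈ μ.cells} :=
  ⟨(c.1.1 + 1, c.1.2), YoungDiagram.mem_tail.mp c.2⟩

theorem shiftCell_injective : Function.Injective (shiftCell (μ := μ)) := fun a b h => by
  simp only [shiftCell, Subtype.mk.injEq, Prod.mk.injEq, add_left_inj] at h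
  exact Subtype.ext (Prod.ext h.1 h.2)

theorem exists_eq_shiftCell_of_fst_ne_zero (c : {c // c ∈ μ.cells}) (hc : c.1.1 ≠ 0) :
    ∃ d, c = shiftCell d := by
  obtain ⟨⟨_ | i, k⟩, h⟩ := c
  · exact absurd rfl hc
  · exact ⟨⟨(i, k), YoungDiagram.mem_tail.mpr h⟩, rfl⟩

variable (T : StandardYoungTableau μ)

def tailEntries : Finset (Fin μ.card) := univ.image (T.1 ∘ shiftCell)

theorem card_tailEntries : T.tailEntries.card = μ.tail.card := by
  rw [tailEntries, card_image_of_injective _ (T.2.1.1.comp shiftCell_injective),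
    card_univ, Fintype.card_coe]

def tailRank (c : {c // c ∈ μ.tail.cells}) : Fin μ.tail.card :=
  (T.tailEntries.orderIsoOfFin T.card_tailEntries).symm
    ⟨T.1 (shiftCell c), mem_image_of_mem _ (mem_univ c)⟩

theorem orderEmbOfFin_tailRank (c : {c // c ∈ μ.tail.cells}) :
    T.tailEntries.orderEmbOfFin T.card_tailEntries (T.tailRank c) = T.1 (shiftCell c) := by
  rw [tailRank, ← coe_orderIsoOfFin_apply, OrderIso.apply_symm_apply]

theorem tailRank_lt_tailRank_iff {a b : {c // c ∈ μ.tail.cells}} :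
    T.tailRank a < T.tailRank b ↔ T.1 (shiftCell a) < T.1 (shiftCell b) := by
  rw [tailRank, tailRank, OrderIso.lt_iff_lt]
  rfl

def restrictTail : StandardYoungTableau μ.tail :=
  ⟨T.tailRank, by
    refine (Fintype.bijective_iff_injective_and_card _).mpr ⟨fun a b h => ?_, by simp⟩
    refine shiftCell_injective (T.2.1.1 ?_)
    rw [← T.orderEmbOfFin_tailRank, ← T.orderEmbOfFin_tailRank, h],
  fun a b h hlt => T.tailRank_lt_tailRank_iff.mpr (T.2.2.1 _ _ (congrArg (· + 1) h) hlt),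
  fun a b h hlt => T.tailRank_lt_tailRank_iff.mpr (T.2.2.2 _ _ h (Nat.succ_lt_succ hlt))⟩

def firstRow (k : {k // (0, k) ∈ μ}) : Fin μ.card :=
  T.1 ⟨(0, k.1), (YoungDiagram.mem_cells _).mpr k.2⟩

theorem firstRow_strictMono : StrictMono T.firstRow := fun _ _ h => T.2.2.1 _ _ rfl h

theorem firstRow_ne_shiftCell (k : {k // (0, k) ∈ μ}) (c : {c // c ∈ μ.tail.cells}) :
    T.firstRow k ≠ T.1 (shiftCell c) := fun h => by
  simpa [shiftCell] using congrArg (·.1.1) (T.2.1.1 h)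

theorem range_firstRow : Set.range T.firstRow = ↑T.tailEntriesᶜ := by
  ext x
  simp only [Set.mem_range, coe_compl, Set.mem_compl_iff, mem_coe, tailEntries,
    mem_image, mem_univ, true_and, Function.comp_apply, not_exists]
  constructor
  · rintro ⟨k, rfl⟩ c hc
    exact T.firstRow_ne_shiftCell k c hc.symm
  · intro hx
    obtain ⟨⟨⟨i, k⟩, hc⟩, rfl⟩ := T.2.1.2 x
    obtain rfl | hi := eq_or_ne i 0
    · exact ⟨⟨k, (YoungDiagram.mem_cells _).mp hc⟩, rfl⟩
    · obtain ⟨d, hd⟩ := exists_eq_shiftCell_of_fst_ne_zero ⟨(i, k), hc⟩ hi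
      exact absurd (congrArg T.1 hd.symm) (hx d)

theorem eq_of_tailEntries_eq_of_restrictTail_eq {T T' : StandardYoungTableau μ}
    (hS : T.tailEntries = T'.tailEntries) (hR : T.restrictTail = T'.restrictTail) : T = T' := by
  have hfirst : T.firstRow = T'.firstRow :=
    (T.firstRow_strictMono.range_inj T'.firstRow_strictMono).mp
      (by rw [range_firstRow, range_firstRow, hS])
  have hrank : T.tailRank = T'.tailRank := congrArg Subtype.val hR
  refine Subtype.ext (funext fun ⟨⟨i, k⟩, hc⟩ => ?_)
  obtain rfl | hi := eq_or_ne i 0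
  · exact congrFun hfirst ⟨k, (YoungDiagram.mem_cells _).mp hc⟩
  · obtain ⟨d, hd⟩ := exists_eq_shiftCell_of_fst_ne_zero ⟨(i, k), hc⟩ hi
    rw [hd, ← orderEmbOfFin_tailRank, ← orderEmbOfFin_tailRank]
    simp only [hS, hrank]

end StandardYoungTableau

open StandardYoungTableau in
theorem sytCard_le_choose_mul_sytCard_tail (μ : YoungDiagram) :
    sytCard μ ≤ μ.card.choose μ.tail.card * sytCard μ.tail := by
  classical
  let encode (T : StandardYoungTableau μ) :
      {s : Finset (Fin μ.card) // s.card = μ.tail.card} × StandardYoungTableau μ.tail :=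
    (⟨T.tailEntries, T.card_tailEntries⟩, T.restrictTail)
  have encode_injective : Function.Injective encode := fun T T' h =>
    eq_of_tailEntries_eq_of_restrictTail_eq (congrArg (·.1.1) h) (congrArg Prod.snd h)
  calc sytCard μ ≤ Nat.card ({s : Finset (Fin μ.card) // s.card = μ.tail.card} ×
        StandardYoungTableau μ.tail) := Nat.card_le_card_of_injective encode encode_injective
    _ = μ.card.choose μ.tail.card * sytCard μ.tail := by
      rw [Nat.card_prod, Nat.card_eq_fintype_card, Fintype.card_finset_len, Fintype.card_fin]
      rfl

end

theorem dim_le_choose_mul_dim_general (n j : ℕ)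
    (μ : Nat.Partition j) (hμ : ∀ x ∈ μ.parts, x ≤ n - j)
    (lam : Nat.Partition n) (hlam : lam.parts = (n - j) ::ₘ μ.parts) :
    dPart lam ≤ n.choose j * dPart μ := by
  have h := sytCard_le_choose_mul_sytCard_tail lam.toYD
  rwa [Nat.Partition.tail_toYD_of_parts_eq_cons hμ hlam, lam.card_toYD, μ.card_toYD] at h

/-- If `λ = (n−j, λ₂, λ₃, …)` is a partition of `n` and `μ = (λ₂, λ₃, …)` is the
partition of `j` obtained by removing the first row, then `d_λ ≤ C(n,j)·d_μ`. -/
theorem dim_le_choose_mul_dim (n j : ℕ) (hj : j ≤ n)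
    (μ : Nat.Partition j) (hμ : ∀ x ∈ μ.parts, x ≤ n - j)
    (lam : Nat.Partition n) (hlam : lam.parts = (n - j) ::ₘ μ.parts) :
    dPart lam ≤ n.choose j * dPart μ :=
  dim_le_choose_mul_dim_general n j μ hμ lam hlam
end

section
/- Let λ = (λ₁ ≥ λ₂ ≥ …) be a partition of n ≥ 2 with conjugate partition λ', and suppose λ₁ ≥ n/2. Define r(λ) = (1/C(n,2)) · ∑_i (C(λ_i,2) − C(λ'_i,2)) and s_λ = 1/n + ((n−1)/n)·r(λ). Then s_λ ≤ 1 − 2(λ₁+1)(n−λ₁)/n². -/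
/-!
Write `k = λ₁` and `m = n - k`. Since `C(a + b, 2) = C(a, 2) + a b + C(b, 2)`, the binomial
`C(·, 2)` is superadditive, so the rows below the first contribute at most `C(m, 2)` to
`∑ C(λ_i, 2)`. Each of the `k` columns satisfies `C(λ'_j, 2) ≥ λ'_j - 1`, so
`∑ C(λ'_j, 2) ≥ n - k = m`. Hence `∑ (C(λ_i, 2) - C(λ'_i, 2)) ≤ C(k, 2) + C(m, 2) - m
= C(n, 2) - (k + 1) m`, and `s_λ = (n + 2 ∑ (C(λ_i, 2) - C(λ'_i, 2))) / n²` gives the bound.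
-/

/-- The character ratio `r(λ) = (1/C(n,2)) ∑_i (C(λ_i,2) − C(λ'_i,2))` of a
partition `λ` of `n` (given as a Young diagram with `n` cells).  Here `λ_i` is the
length of row `i` and `λ'_i` the length of column `i`. -/
noncomputable def charRatio (n : ℕ) (μ : YoungDiagram) : ℝ :=
  ((n.choose 2 : ℝ))⁻¹ *
    ∑' i : ℕ, (((μ.rowLen i).choose 2 : ℝ) - ((μ.colLen i).choose 2 : ℝ))

/-- The modified character ratio `s_λ = 1/n + ((n−1)/n)·r(λ)`. -/
noncomputable def sMod (n : ℕ) (μ : YoungDiagram) : ℝ :=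
  1 / (n : ℝ) + ((n : ℝ) - 1) / (n : ℝ) * charRatio n μ

open Finset

theorem Nat.choose_two_add (a b : ℕ) : (a + b).choose 2 = a.choose 2 + a * b + b.choose 2 := by
  apply Nat.cast_injective (R := ℚ)
  push_cast [Nat.cast_choose_two]
  ring

theorem Nat.sub_one_le_choose_two (c : ℕ) : c - 1 ≤ c.choose 2 := by
  cases c with
  | zero => simp
  | succ d => simp [Nat.choose_succ_succ']

theorem Finset.sum_choose_two_le_choose_two_sum {ι : Type*} (s : Finset ι) (f : ι → ℕ) :
    ∑ i ∈ s, (f i).choose 2 ≤ (∑ i ∈ s, f i).choose 2 := by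
  classical
  induction s using Finset.induction_on with
  | empty => simp
  | insert a s ha ih =>
    rw [sum_insert ha, sum_insert ha, Nat.choose_two_add]
    omega

namespace YoungDiagram

variable (μ : YoungDiagram)

@[simp]
theorem card_transpose : μ.transpose.card = μ.card := by
  simp [YoungDiagram.card, transpose]

theorem rowLen_le_card (i : ℕ) : μ.rowLen i ≤ μ.card :=
  μ.rowLen_eq_card ▸ card_filter_le _ _

theorem colLen_le_card (j : ℕ) : μ.colLen j ≤ μ.card :=
  μ.colLen_eq_card ▸ card_filter_le _ _

theorem rowLen_eq_zero_of_colLen_zero_le {i : ℕ} (hi : μ.colLen 0 ≤ i) : μ.rowLen i = 0 := by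
  by_contra h
  have := mem_iff_lt_colLen.1 (mem_iff_lt_rowLen.2 (Nat.pos_of_ne_zero h))
  omega

theorem colLen_eq_zero_of_rowLen_zero_le {j : ℕ} (hj : μ.rowLen 0 ≤ j) : μ.colLen j = 0 := by
  simpa using μ.transpose.rowLen_eq_zero_of_colLen_zero_le (i := j) (by simpa using hj)

theorem sum_rowLen_eq_card {s : Finset ℕ} (hs : range (μ.colLen 0) ⊆ s) :
    ∑ i ∈ s, μ.rowLen i = μ.card := by
  have hfst : ∀ c ∈ μ.cells, c.1 ∈ s := fun c hc =>
    hs (mem_range.2 (mem_iff_lt_colLen.1 (μ.up_left_mem le_rfl (Nat.zero_le c.2) hc)))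
  simp only [rowLen_eq_card]
  exact (card_eq_sum_card_fiberwise hfst).symm

theorem sum_colLen_eq_card {s : Finset ℕ} (hs : range (μ.rowLen 0) ⊆ s) :
    ∑ j ∈ s, μ.colLen j = μ.card := by
  simpa using μ.transpose.sum_rowLen_eq_card (s := s) (by simpa using hs)

theorem sum_choose_two_rowLen_le {s : Finset ℕ} (hs : range (μ.colLen 0) ⊆ s) (h0 : 0 ∈ s) :
    ∑ i ∈ s, (μ.rowLen i).choose 2 ≤
      (μ.rowLen 0).choose 2 + (μ.card - μ.rowLen 0).choose 2 := by
  have hrest : ∑ i ∈ s.erase 0, μ.rowLen i = μ.card - μ.rowLen 0 := by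
    rw [← μ.sum_rowLen_eq_card hs, ← add_sum_erase s _ h0, Nat.add_sub_cancel_left]
  rw [← add_sum_erase s _ h0, ← hrest]
  exact Nat.add_le_add_left (sum_choose_two_le_choose_two_sum _ _) _

theorem card_sub_rowLen_zero_le_sum_choose_two_colLen {s : Finset ℕ}
    (hs : range (μ.rowLen 0) ⊆ s) :
    μ.card - μ.rowLen 0 ≤ ∑ j ∈ s, (μ.colLen j).choose 2 := by
  set k := μ.rowLen 0
  have hcard : μ.card ≤ ∑ j ∈ range k, (μ.colLen j - 1) + k := calc
    μ.card = ∑ j ∈ range k, μ.colLen j := (μ.sum_colLen_eq_card subset_rfl).symm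
    _ ≤ ∑ j ∈ range k, (μ.colLen j - 1 + 1) := sum_le_sum fun j _ => le_tsub_add
    _ = ∑ j ∈ range k, (μ.colLen j - 1) + k := by
      rw [sum_add_distrib, sum_const, card_range, smul_eq_mul, mul_one]
  calc μ.card - k ≤ ∑ j ∈ range k, (μ.colLen j - 1) := by omega
    _ ≤ ∑ j ∈ range k, (μ.colLen j).choose 2 :=
      sum_le_sum fun j _ => Nat.sub_one_le_choose_two _
    _ ≤ ∑ j ∈ s, (μ.colLen j).choose 2 := sum_le_sum_of_subset hs

theorem tsum_choose_two_rowLen_sub_colLen_eq_sum :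
    ∑' i, ((μ.rowLen i).choose 2 - (μ.colLen i).choose 2 : ℝ) =
      ∑ i ∈ range (μ.card + 1), ((μ.rowLen i).choose 2 - (μ.colLen i).choose 2 : ℝ) := by
  refine tsum_eq_sum fun i hi => ?_
  have hi : μ.card < i := by simpa using hi
  rw [μ.rowLen_eq_zero_of_colLen_zero_le (by linarith [μ.colLen_le_card 0]),
    μ.colLen_eq_zero_of_rowLen_zero_le (by linarith [μ.rowLen_le_card 0])]
  simp

theorem tsum_choose_two_rowLen_sub_colLen_le :
    ∑' i, ((μ.rowLen i).choose 2 - (μ.colLen i).choose 2 : ℝ) ≤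
      (μ.card : ℝ) * (μ.card - 1) / 2 - (μ.rowLen 0 + 1) * (μ.card - μ.rowLen 0) := by
  have hk := μ.rowLen_le_card 0
  have hrows : ∑ i ∈ range (μ.card + 1), ((μ.rowLen i).choose 2 : ℝ) ≤
      (((μ.rowLen 0).choose 2 + (μ.card - μ.rowLen 0).choose 2 : ℕ) : ℝ) := by
    exact_mod_cast μ.sum_choose_two_rowLen_le
      (range_subset_range.2 (by linarith [μ.colLen_le_card 0])) (by simp)
  have hcols : ((μ.card - μ.rowLen 0 : ℕ) : ℝ) ≤
      ∑ i ∈ range (μ.card + 1), ((μ.colLen i).choose 2 : ℝ) := by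
    exact_mod_cast μ.card_sub_rowLen_zero_le_sum_choose_two_colLen
      (range_subset_range.2 (by linarith))
  rw [Nat.cast_add, Nat.cast_choose_two, Nat.cast_choose_two, Nat.cast_sub hk] at hrows
  rw [Nat.cast_sub hk] at hcols
  rw [tsum_choose_two_rowLen_sub_colLen_eq_sum, sum_sub_distrib]
  calc _ ≤ (μ.rowLen 0 : ℝ) * (μ.rowLen 0 - 1) / 2
        + (μ.card - μ.rowLen 0) * (μ.card - μ.rowLen 0 - 1) / 2 - (μ.card - μ.rowLen 0) :=
        sub_le_sub hrows hcols
    _ = _ := by ring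

end YoungDiagram

theorem sMod_le_of_large_first_row_general (n : ℕ) (hn : 2 ≤ n)
    (μ : YoungDiagram) (hμ : μ.card = n) :
    sMod n μ ≤ 1 - 2 * ((μ.rowLen 0 : ℝ) + 1) * ((n : ℝ) - (μ.rowLen 0 : ℝ)) / (n : ℝ) ^ 2 := by
  subst hμ
  set D := ∑' i, ((μ.rowLen i).choose 2 - (μ.colLen i).choose 2 : ℝ)
  have hnR : (2 : ℝ) ≤ μ.card := by exact_mod_cast hn
  have hs : sMod μ.card μ = (μ.card + 2 * D) / μ.card ^ 2 := by
    have : (μ.card : ℝ) - 1 ≠ 0 := by linarith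
    rw [sMod, charRatio, Nat.cast_choose_two]
    field_simp
    ring
  rw [hs, le_sub_iff_add_le, ← add_div, div_le_one (by positivity)]
  linarith [μ.tsum_choose_two_rowLen_sub_colLen_le]

/-- For a partition `λ` of `n ≥ 2` with `λ₁ ≥ n/2`, one has
`s_λ ≤ 1 − 2(λ₁+1)(n−λ₁)/n²`. -/
theorem sMod_le_of_large_first_row (n : ℕ) (hn : 2 ≤ n)
    (μ : YoungDiagram) (hμ : μ.card = n) (h1 : (n : ℝ) / 2 ≤ (μ.rowLen 0 : ℝ)) :
    sMod n μ ≤ 1 - 2 * ((μ.rowLen 0 : ℝ) + 1) * ((n : ℝ) - (μ.rowLen 0 : ℝ)) / (n : ℝ) ^ 2 :=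
  sMod_le_of_large_first_row_general n hn μ hμ
end

section
/- Let q, m, n ≥ 1 and for σ ∈ S_n let N_q(σ) denote the number of q-cycles in the disjoint-cycle decomposition of σ. Then the number of permutations σ ∈ S_n with N_q(σ) = m is at most n! / (q^m · m!); equivalently, for σ chosen uniformly at random in S_n, ℙ(N_q(σ) = m) ≤ 1/(q^m m!). -/
/-!
The points lying on `q`-cycles of `σ` form a `σ`-invariant set `U` of size `q m`, on which `σ`
restricts to a permutation all of whose cycles have length `q`, i.e. of cycle type `(q^m)`. So `σ`
is determined by a choice of `U` (`C(n, q m)` ways), an element of that conjugacy class of `S_U`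
(`(q m)! / (q^m m!)` of them) and a permutation of the complement (`(n - q m)!` of them).
-/

open Finset
open scoped Classical

/-- The number `N_q(σ)` of `q`-cycles in the disjoint-cycle decomposition of the
permutation `σ`: the number of points whose orbit under `σ` has size exactly `q`,
divided by `q` (fixed points are cycles of length `1`). -/
noncomputable def cycleCount {n : ℕ} (σ : Equiv.Perm (Fin n)) (q : ℕ) : ℕ :=
  (univ.filter fun x => Function.minimalPeriod (⇑σ) x = q).card / q

open Function
open scoped Nat

namespace Equiv.Perm

variable {α : Type*} [Fintype α] [DecidableEq α] {σ : Perm α} {q m : ℕ}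

theorem minimalPeriod_eq_card_support_cycleOf {a : α} (ha : a ∈ σ.support) :
    minimalPeriod σ a = #(σ.cycleOf a).support := by
  have hcyc : (σ.cycleOf a).IsCycle := isCycle_cycleOf σ (mem_support.mp ha)
  rw [← hcyc.orderOf, ← Nat.dvd_right_iff_eq]
  intro k
  rw [← isPeriodicPt_iff_minimalPeriod_dvd, orderOf_dvd_iff_pow_eq_one,
    hcyc.pow_eq_one_iff' (by rwa [cycleOf_apply_self, ← mem_support]), cycleOf_pow_apply_self,
    IsPeriodicPt, IsFixedPt, iterate_eq_pow]

theorem cycleType_eq_replicate_of_forall_minimalPeriod_eq (h : ∀ x, minimalPeriod σ x = q) :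
    σ.cycleType = Multiset.replicate σ.cycleType.card q := by
  rw [Multiset.eq_replicate_card]
  intro b hb
  obtain ⟨c, hc, rfl⟩ := Multiset.mem_map.mp (cycleType_def σ ▸ hb)
  obtain ⟨a, ha⟩ := (mem_cycleFactorsFinset_iff.mp hc).1.nonempty_support
  rw [Function.comp_apply, cycle_is_cycleOf ha hc, ← h a,
    minimalPeriod_eq_card_support_cycleOf (mem_cycleFactorsFinset_support_le hc ha)]

theorem card_eq_mul_card_cycleType_of_forall_minimalPeriod_eq (hq : 2 ≤ q)
    (h : ∀ x, minimalPeriod σ x = q) : Fintype.card α = q * σ.cycleType.card := by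
  have hsupp : σ.support = univ := by
    refine eq_univ_of_forall fun x => mem_support.mpr fun hx => ?_
    have := (h x).symm.trans (minimalPeriod_eq_one_iff_isFixedPt.mpr hx)
    omega
  rw [← Finset.card_univ, ← hsupp, ← sum_cycleType,
    cycleType_eq_replicate_of_forall_minimalPeriod_eq h, Multiset.sum_replicate,
    Multiset.card_replicate, smul_eq_mul, mul_comm]

theorem card_filter_forall_minimalPeriod_eq_mul_le (hq : 0 < q) (hα : Fintype.card α = q * m) :
    #{σ : Perm α | ∀ x, minimalPeriod σ x = q} * (q ^ m * m !) ≤ (q * m)! := by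
  obtain rfl | hq : q = 1 ∨ 2 ≤ q := by omega
  · have hsub : ({σ : Perm α | ∀ x, minimalPeriod σ x = 1} : Finset (Perm α)) ⊆ {1} := by
      intro σ hσ
      simp only [mem_filter, mem_univ, true_and, minimalPeriod_eq_one_iff_isFixedPt] at hσ
      exact mem_singleton.mpr (Equiv.ext hσ)
    simpa using Nat.mul_le_mul_right (m !) (card_le_card hsub)
  · have hsub : ({σ : Perm α | ∀ x, minimalPeriod σ x = q} : Finset (Perm α)) ⊆
        ({σ : Perm α | σ.cycleType = Multiset.replicate m q} : Finset (Perm α)) := by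
      intro σ hσ
      simp only [mem_filter, mem_univ, true_and] at hσ ⊢
      have hcard := card_eq_mul_card_cycleType_of_forall_minimalPeriod_eq hq hσ
      rw [cycleType_eq_replicate_of_forall_minimalPeriod_eq hσ,
        Nat.eq_of_mul_eq_mul_left (by omega) (hcard.symm.trans hα)]
    have hcount : #{σ : Perm α | σ.cycleType = Multiset.replicate m q} * (q ^ m * m !) =
        (q * m)! := by
      have := card_of_cycleType_mul_eq α (Multiset.replicate m q)
      rw [if_pos ⟨by simp [hα, mul_comm],
        fun a ha => Multiset.eq_of_mem_replicate ha ▸ hq⟩, hα] at this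
      convert this using 2
      rcases m.eq_zero_or_pos with rfl | hm
      · simp
      · simp [Multiset.toFinset_replicate, hm.ne', mul_comm]
    exact hcount ▸ Nat.mul_le_mul_right _ (card_le_card hsub)

omit [Fintype α] [DecidableEq α] in
theorem minimalPeriod_subtypePerm {p : α → Prop} (h : ∀ x, p (σ x) ↔ p x) (x : {x // p x}) :
    minimalPeriod (σ.subtypePerm h) x = minimalPeriod σ x := by
  refine minimalPeriod_eq_minimalPeriod_iff.mpr fun k => ?_
  simp only [IsPeriodicPt, IsFixedPt, iterate_eq_pow, subtypePerm_pow, subtypePerm_apply,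
    Subtype.ext_iff]

omit [DecidableEq α] in
theorem minimalPeriod_apply (σ : Perm α) (x : α) : minimalPeriod σ (σ x) = minimalPeriod σ x :=
  Function.minimalPeriod_apply (σ.injective.mem_periodicPts x)

theorem dvd_card_filter_minimalPeriod_eq (hq : 0 < q) (σ : Perm α) :
    q ∣ #{x | minimalPeriod σ x = q} := by
  obtain rfl | hq : q = 1 ∨ 2 ≤ q := by omega
  · exact one_dvd _
  · let τ := σ.subtypePerm (p := fun x => minimalPeriod σ x = q)
      fun x => by rw [minimalPeriod_apply]
    have hτ : ∀ x, minimalPeriod τ x = q := fun x => (minimalPeriod_subtypePerm _ x).trans x.2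
    rw [← Fintype.card_subtype]
    exact ⟨_, card_eq_mul_card_cycleType_of_forall_minimalPeriod_eq hq hτ⟩

theorem card_filter_filter_minimalPeriod_eq_mul_le (hq : 0 < q) {U : Finset α} (hU : #U = q * m) :
    #{σ : Perm α | ({x | minimalPeriod σ x = q} : Finset α) = U} * (q ^ m * m !) ≤
      (q * m)! * (Fintype.card α - q * m)! := by
  let S : Finset (Perm U) := {τ | ∀ x, minimalPeriod τ x = q}
  have hsub : ({σ : Perm α | ({x | minimalPeriod σ x = q} : Finset α) = U} : Finset (Perm α)) ⊆
      (S ×ˢ univ).image fun τρ : Perm U × Perm {x // x ∉ U} => subtypeCongr τρ.1 τρ.2 := by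
    intro σ hσ
    simp only [mem_filter, mem_univ, true_and] at hσ
    have hmem : ∀ x, x ∈ U ↔ minimalPeriod σ x = q := by simp [← hσ]
    have hinv : ∀ x, σ x ∈ U ↔ x ∈ U := by simp [hmem, minimalPeriod_apply]
    refine mem_image.mpr ⟨(σ.subtypePerm hinv, σ.subtypePerm (p := (· ∉ U)) (by simp [hinv])),
      mem_product.mpr ⟨mem_filter.mpr ⟨mem_univ _, fun x => ?_⟩, mem_univ _⟩, ?_⟩
    · exact (minimalPeriod_subtypePerm hinv x).trans ((hmem x).mp x.2)
    · ext x
      by_cases hx : x ∈ U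
      · simp [subtypeCongr.left_apply _ _ hx]
      · simp [subtypeCongr.right_apply _ _ hx]
  have hUc : Fintype.card (Perm {x // x ∉ U}) = (Fintype.card α - q * m)! := by
    rw [Fintype.card_perm, Fintype.card_subtype_compl, Fintype.card_coe, hU]
  calc _ ≤ #S * (Fintype.card α - q * m)! * (q ^ m * m !) := by
        refine Nat.mul_le_mul_right _ ((card_le_card hsub).trans card_image_le |>.trans ?_)
        rw [card_product, Finset.card_univ, hUc]
    _ = #S * (q ^ m * m !) * (Fintype.card α - q * m)! := by ring
    _ ≤ (q * m)! * (Fintype.card α - q * m)! :=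
        Nat.mul_le_mul_right _
          (card_filter_forall_minimalPeriod_eq_mul_le hq ((Fintype.card_coe U).trans hU))

theorem card_filter_card_filter_minimalPeriod_eq_mul_le (hq : 0 < q) :
    #{σ : Perm α | #{x | minimalPeriod σ x = q} = q * m} * (q ^ m * m !) ≤ (Fintype.card α)! := by
  have hmaps : ∀ σ ∈ ({σ : Perm α | #{x | minimalPeriod σ x = q} = q * m} : Finset (Perm α)),
      ({x | minimalPeriod σ x = q} : Finset α) ∈ powersetCard (q * m) univ := by
    intro σ hσ
    exact mem_powersetCard.mpr ⟨subset_univ _, (mem_filter.mp hσ).2⟩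
  rw [card_eq_sum_card_fiberwise hmaps, sum_mul]
  calc _ ≤ ∑ _U ∈ powersetCard (q * m) (univ : Finset α), (q * m)! * (Fintype.card α - q * m)! := by
        refine sum_le_sum fun U hU => le_trans ?_
          (card_filter_filter_minimalPeriod_eq_mul_le hq (mem_powersetCard.mp hU).2)
        exact Nat.mul_le_mul_right _ (card_le_card (filter_subset_filter _ (subset_univ _)))
    _ = (Fintype.card α).choose (q * m) * (q * m)! * (Fintype.card α - q * m)! := by
        rw [sum_const, card_powersetCard, Finset.card_univ, smul_eq_mul, mul_assoc]
    _ ≤ (Fintype.card α)! := by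
        rcases le_or_gt (q * m) (Fintype.card α) with h | h
        · exact (Nat.choose_mul_factorial_mul_factorial h).le
        · simp [Nat.choose_eq_zero_of_lt h]

end Equiv.Perm

theorem cycleCount_eq_iff {n q m : ℕ} (hq : 0 < q) (σ : Equiv.Perm (Fin n)) :
    cycleCount σ q = m ↔ #{x | minimalPeriod σ x = q} = q * m := by
  rw [cycleCount, Nat.div_eq_iff_eq_mul_left hq (σ.dvd_card_filter_minimalPeriod_eq hq), mul_comm]

theorem count_perms_with_m_qcycles_general (q m n : ℕ) (hq : 1 ≤ q) :
    (((univ.filter fun σ : Equiv.Perm (Fin n) => cycleCount σ q = m).card : ℝ)) ≤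
      (n.factorial : ℝ) / ((q : ℝ) ^ m * (m.factorial : ℝ)) := by
  have hcount := Equiv.Perm.card_filter_card_filter_minimalPeriod_eq_mul_le (α := Fin n) (m := m) hq
  rw [Fintype.card_fin, ← filter_congr fun σ _ => cycleCount_eq_iff hq σ] at hcount
  rw [le_div_iff₀ (by positivity)]
  exact_mod_cast hcount

/-- The number of permutations `σ ∈ S_n` with exactly `m` `q`-cycles is at most
`n! / (q^m · m!)`. -/
theorem count_perms_with_m_qcycles (q m n : ℕ) (hq : 1 ≤ q) (hm : 1 ≤ m) (hn : 1 ≤ n) :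
    (((univ.filter fun σ : Equiv.Perm (Fin n) => cycleCount σ q = m).card : ℝ)) ≤
      (n.factorial : ℝ) / ((q : ℝ) ^ m * (m.factorial : ℝ)) :=
  count_perms_with_m_qcycles_general q m n hq
end

section
/- Fix c ∈ ℝ. For every ε > 0 there exists M₀ = M₀(ε,c) ≥ 1 such that for all M ≥ M₀ and all n ≥ 1, | (1/n!)·∑_{σ ∈ S_n} | ∑_{j=1}^{M} e^{−2jc} T_j(Fix(σ)) | − (1/n!)·∑_{σ ∈ S_n} | ∑_{j=1}^{∞} e^{−2jc} T_j(Fix(σ)) | | ≤ ε, where the inner infinite series converges absolutely for every σ. -/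
open Finset

/-- The polynomial `T_j` evaluated at a natural number:
`T_j(N) = ∑_{i=0}^{j} C(N, j−i)·(−1)^i/i!`. -/
noncomputable def T (j : ℕ) (N : ℕ) : ℝ :=
  ∑ i ∈ range (j + 1), (N.choose (j - i) : ℝ) * (-1 : ℝ) ^ i / (i.factorial : ℝ)

/-- The number of fixed points of a permutation. -/
def fixCount {n : ℕ} (σ : Equiv.Perm (Fin n)) : ℕ :=
  (univ.filter fun x => σ x = x).card

open Equiv
open scoped Nat

/-! Counting pairs of an `m`-set and a permutation fixing it pointwise shows that the average of
`C(Fix σ, m)` over `S_n` is at most `1/m!`, so the average of `|T_j(Fix σ)|` is at most `2^j/j!`,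
uniformly in `n`. Hence the average of `∑_{j>M} e^{-2jc} |T_j(Fix σ)|` is bounded by the tail of
the convergent series `∑_j (2e^{-2c})^j/j!`, whatever `n` is. -/

section FixedPoints

variable {α : Type*} [Fintype α] [DecidableEq α]

theorem card_perm_fixing_pointwise (S : Finset α) :
    #{σ : Perm α | ∀ x ∈ S, σ x = x} = (Fintype.card α - #S)! := by
  have e := Perm.subtypeEquivSubtypePerm (fun x : α => x ∉ S)
  simp only [not_not] at e
  rw [← Fintype.card_subtype, ← Fintype.card_congr e, Fintype.card_perm,
    Fintype.card_subtype_compl, Fintype.card_coe]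

theorem sum_choose_card_fixedPoints (m : ℕ) :
    ∑ σ : Perm α, (#{x | σ x = x}).choose m =
      (Fintype.card α).choose m * (Fintype.card α - m)! := by
  have h : ∀ σ : Perm α, (#{x | σ x = x}).choose m =
      #((powersetCard m univ).bipartiteAbove (fun (σ : Perm α) S => ∀ x ∈ S, σ x = x) σ) := by
    intro σ
    rw [← card_powersetCard, bipartiteAbove]
    congr 1
    ext S
    simp [mem_powersetCard, subset_iff, and_comm]
  simp_rw [h, sum_card_bipartiteAbove_eq_sum_card_bipartiteBelow]
  rw [sum_congr rfl fun S hS => by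
      rw [bipartiteBelow, card_perm_fixing_pointwise, (mem_powersetCard.1 hS).2],
    sum_const, card_powersetCard, card_univ, smul_eq_mul]

theorem sum_choose_card_fixedPoints_mul_factorial_le (m : ℕ) :
    (∑ σ : Perm α, (#{x | σ x = x}).choose m) * m ! ≤ (Fintype.card α)! := by
  rw [sum_choose_card_fixedPoints]
  rcases le_or_gt m (Fintype.card α) with hm | hm
  · rw [mul_right_comm, Nat.choose_mul_factorial_mul_factorial hm]
  · simp [Nat.choose_eq_zero_of_lt hm]

theorem abs_T_le (k N : ℕ) :
    |T k N| ≤ ∑ i ∈ range (k + 1), (N.choose (k - i) : ℝ) / i ! := by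
  refine (abs_sum_le_sum_abs _ _).trans_eq (sum_congr rfl fun i _ => ?_)
  simp [abs_div]

theorem sum_abs_T_card_fixedPoints_le (k : ℕ) :
    ∑ σ : Perm α, |T k #{x | σ x = x}| ≤ (Fintype.card α)! * 2 ^ k / k ! := by
  set n := Fintype.card α
  have hchoose (m : ℕ) : ∑ σ : Perm α, ((#{x | σ x = x}).choose m : ℝ) ≤ n ! / m ! := by
    rw [le_div_iff₀ (by positivity)]
    exact_mod_cast sum_choose_card_fixedPoints_mul_factorial_le m
  calc ∑ σ : Perm α, |T k #{x | σ x = x}|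
      ≤ ∑ σ : Perm α, ∑ i ∈ range (k + 1), ((#{x | σ x = x}).choose (k - i) : ℝ) / i ! :=
        sum_le_sum fun σ _ => abs_T_le k _
    _ = ∑ i ∈ range (k + 1), (∑ σ : Perm α, ((#{x | σ x = x}).choose (k - i) : ℝ)) / i ! := by
        rw [sum_comm]
        simp_rw [sum_div]
    _ ≤ ∑ i ∈ range (k + 1), ((n ! : ℝ) / (k - i)!) / i ! :=
        sum_le_sum fun i _ => div_le_div_of_nonneg_right (hchoose _) (by positivity)
    _ = ∑ i ∈ range (k + 1), (n ! : ℝ) * k.choose i / k ! := by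
        refine sum_congr rfl fun i hi => ?_
        rw [Nat.cast_choose ℝ (Nat.lt_succ_iff.1 (mem_range.1 hi))]
        field_simp
    _ = (n ! : ℝ) * 2 ^ k / k ! := by
        rw [← sum_div, ← mul_sum, ← Nat.cast_sum, Nat.sum_range_choose, Nat.cast_pow,
          Nat.cast_ofNat]

theorem sum_abs_pow_mul_T_le (t : ℝ) (k : ℕ) :
    ∑ σ : Perm α, |t ^ k * T k #{x | σ x = x}| ≤ (Fintype.card α)! * ((2 * |t|) ^ k / k !) := by
  simp_rw [abs_mul, ← mul_sum, abs_pow]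
  calc |t| ^ k * ∑ σ : Perm α, |T k #{x | σ x = x}|
      ≤ |t| ^ k * ((Fintype.card α)! * 2 ^ k / k !) := by
        gcongr
        exact sum_abs_T_card_fixedPoints_le k
    _ = (Fintype.card α)! * ((2 * |t|) ^ k / k !) := by ring

-- The identity of `Fin N` has `N` fixed points, so the bound on the sum over `S_N` bounds
-- each summand.
theorem abs_pow_mul_T_le (t : ℝ) (k N : ℕ) :
    |t ^ k * T k N| ≤ N ! * ((2 * |t|) ^ k / k !) := by
  have hfix : #{x | (1 : Perm (Fin N)) x = x} = N := by simp
  calc |t ^ k * T k N| = |t ^ k * T k #{x | (1 : Perm (Fin N)) x = x}| := by rw [hfix]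
    _ ≤ ∑ σ : Perm (Fin N), |t ^ k * T k #{x | σ x = x}| :=
        single_le_sum (f := fun σ : Perm (Fin N) => |t ^ k * T k #{x | σ x = x}|)
          (fun _ _ => abs_nonneg _) (mem_univ 1)
    _ ≤ N ! * ((2 * |t|) ^ k / k !) :=
        (sum_abs_pow_mul_T_le (α := Fin N) t k).trans_eq (by rw [Fintype.card_fin])

end FixedPoints

theorem abs_sum_abs_sum_range_sub_sum_abs_tsum_le {ι : Type*} [Fintype ι] {F : ι → ℕ → ℝ}
    {g : ℕ → ℝ} (hg : Summable g) (hFg : ∀ j, ∑ i, |F i j| ≤ g j) (M : ℕ) :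
    |(∑ i, |∑ j ∈ range M, F i j|) - (∑ i, |∑' j, F i j|)| ≤ ∑' j, g (j + M) := by
  have hF (i : ι) : Summable fun j => |F i j| :=
    hg.of_nonneg_of_le (fun _ => abs_nonneg _)
      fun j => (single_le_sum (fun i _ => abs_nonneg (F i j)) (mem_univ i)).trans (hFg j)
  have hFtail (i : ι) : Summable fun j => |F i (j + M)| := (summable_nat_add_iff M).2 (hF i)
  have htail (i : ι) : |(|∑ j ∈ range M, F i j| - |∑' j, F i j|)| ≤ ∑' j, |F i (j + M)| :=
    calc |(|∑ j ∈ range M, F i j| - |∑' j, F i j|)|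
        ≤ |∑ j ∈ range M, F i j - ∑' j, F i j| := abs_abs_sub_abs_le_abs_sub _ _
      _ = |∑' j, F i (j + M)| := by
          rw [← (hF i).of_abs.sum_add_tsum_nat_add M, sub_add_cancel_left, abs_neg]
      _ ≤ ∑' j, |F i (j + M)| :=
          norm_tsum_le_tsum_norm (f := fun j => F i (j + M)) (hFtail i)
  calc |(∑ i, |∑ j ∈ range M, F i j|) - (∑ i, |∑' j, F i j|)|
      ≤ ∑ i, |(|∑ j ∈ range M, F i j| - |∑' j, F i j|)| := by
        rw [← sum_sub_distrib]
        exact abs_sum_le_sum_abs _ _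
    _ ≤ ∑ i, ∑' j, |F i (j + M)| := sum_le_sum fun i _ => htail i
    _ = ∑' j, ∑ i, |F i (j + M)| := (Summable.tsum_finsetSum fun i _ => hFtail i).symm
    _ ≤ ∑' j, g (j + M) :=
        Summable.tsum_le_tsum (fun j => hFg (j + M)) (summable_sum fun i _ => hFtail i)
          ((summable_nat_add_iff M).2 hg)

theorem sum_Icc_one_eq_sum_range {M : Type*} [AddCommMonoid M] (f : ℕ → M) (n : ℕ) :
    ∑ j ∈ Icc 1 n, f j = ∑ j ∈ range n, f (j + 1) := by
  rw [← Ico_add_one_right_eq_Icc, sum_Ico_eq_sum_range, Nat.add_sub_cancel]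
  simp_rw [add_comm 1]

/-- The series `∑_{j≥1} e^{−2jc} T_j(Fix σ)` converges absolutely, and tails are
negligible: for every `ε > 0` there is `M₀ ≥ 1` such that for all `M ≥ M₀` and all
`n ≥ 1`, the averages over `S_n` of `|∑_{j=1}^M e^{−2jc} T_j(Fix σ)|` and of
`|∑_{j=1}^∞ e^{−2jc} T_j(Fix σ)|` differ by at most `ε`. -/
theorem neglect_high_degree_polynomials (c : ℝ) :
    (∀ N : ℕ, Summable fun j : ℕ =>
      |Real.exp (-2 * ((j : ℝ) + 1) * c) * T (j + 1) N|) ∧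
    ∀ ε > (0 : ℝ), ∃ M₀ : ℕ, 1 ≤ M₀ ∧ ∀ M ≥ M₀, ∀ n : ℕ, 1 ≤ n →
      abs ((1 / (n.factorial : ℝ)) * (∑ σ : Equiv.Perm (Fin n),
          |∑ j ∈ Icc 1 M, Real.exp (-2 * (j : ℝ) * c) * T j (fixCount σ)|) -
        (1 / (n.factorial : ℝ)) * ∑ σ : Equiv.Perm (Fin n),
          |∑' j : ℕ, Real.exp (-2 * ((j : ℝ) + 1) * c) * T (j + 1) (fixCount σ)|) ≤ ε := by
  set x := Real.exp (-2 * c)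
  have hexp (j : ℕ) : Real.exp (-2 * ((j : ℝ) + 1) * c) = x ^ (j + 1) := by
    rw [← Real.exp_nat_mul]; push_cast; ring_nf
  set g : ℕ → ℝ := fun j => (2 * |x|) ^ (j + 1) / (j + 1)!
  have hg : Summable g := (summable_nat_add_iff 1).2 (Real.summable_pow_div_factorial _)
  refine ⟨fun N => ?_, fun ε hε => ?_⟩
  · simp_rw [hexp]
    exact (hg.mul_left (N ! : ℝ)).of_nonneg_of_le (fun _ => abs_nonneg _)
      fun j => abs_pow_mul_T_le x (j + 1) N
  obtain ⟨M₁, hM₁⟩ :=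
    Filter.eventually_atTop.1 ((tendsto_order.1 (tendsto_sum_nat_add g)).2 ε hε)
  refine ⟨max M₁ 1, le_max_right _ _, fun M hM n _ => ?_⟩
  have htail := abs_sum_abs_sum_range_sub_sum_abs_tsum_le
    (F := fun (σ : Perm (Fin n)) j => x ^ (j + 1) * T (j + 1) (fixCount σ))
    (hg.mul_left (n ! : ℝ))
    (fun j => (sum_abs_pow_mul_T_le x (j + 1)).trans_eq (by rw [Fintype.card_fin])) M
  rw [tsum_mul_left] at htail
  simp_rw [sum_Icc_one_eq_sum_range, Nat.cast_add_one, hexp, ← mul_sub, abs_mul]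
  rw [abs_of_pos (by positivity), one_div_mul_eq_div, div_le_iff₀ (by positivity), mul_comm ε]
  exact htail.trans (mul_le_mul_of_nonneg_left (hM₁ M (le_of_max_le_left hM)).le (by positivity))
end

section
/- Let j ≥ 1 and r ≥ 0 be integers. If r ≥ j then |T_j(r)| ≤ 2^r. If r ≤ j then |T_j(r)|/r! ≤ 2^r / (⌊j/2⌋!)². -/
/-!
Termwise, `|T_j(r)| ≤ ∑ᵢ C(r, j-i)/i!`, and a sum of distinct binomial coefficients `C(r, ·)` is
at most `2^r`. When `r ≤ j`, the term of index `i` vanishes unless `j - r ≤ i`, and then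
`i! r! ≥ (j-r)! r! ≥ (⌊j/2⌋!)²` because `C(j, r) ≤ C(j, ⌊j/2⌋)`.
-/

open Finset

open scoped Nat

theorem Nat.factorial_div_two_sq_le {a j : ℕ} (ha : a ≤ j) : (j / 2)! ^ 2 ≤ a ! * (j - a)! := by
  have hmiddle : (j / 2)! ^ 2 ≤ (j / 2)! * (j - j / 2)! := by
    rw [sq]
    exact Nat.mul_le_mul_left _ (Nat.factorial_le (by omega))
  refine hmiddle.trans (Nat.le_of_mul_le_mul_left ?_ (Nat.choose_pos ha))
  calc j.choose a * ((j / 2)! * (j - j / 2)!)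
      ≤ j.choose (j / 2) * ((j / 2)! * (j - j / 2)!) :=
        Nat.mul_le_mul_right _ (Nat.choose_le_middle a j)
    _ = j ! := by rw [← mul_assoc, Nat.choose_mul_factorial_mul_factorial (Nat.div_le_self j 2)]
    _ = j.choose a * (a ! * (j - a)!) := by
        rw [← mul_assoc, Nat.choose_mul_factorial_mul_factorial ha]

theorem Nat.factorial_div_two_sq_le_of_choose_sub_ne_zero {i j r : ℕ} (hrj : r ≤ j)
    (hchoose : r.choose (j - i) ≠ 0) : (j / 2)! ^ 2 ≤ i ! * r ! := by
  have hi : j - r ≤ i := by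
    by_contra! hlt
    exact hchoose (Nat.choose_eq_zero_of_lt (by omega))
  calc (j / 2)! ^ 2 ≤ r ! * (j - r)! := Nat.factorial_div_two_sq_le hrj
    _ ≤ r ! * i ! := Nat.mul_le_mul_left _ (Nat.factorial_le hi)
    _ = i ! * r ! := mul_comm _ _

theorem Nat.sum_range_choose_sub_le (n j : ℕ) :
    ∑ i ∈ range (j + 1), n.choose (j - i) ≤ 2 ^ n :=
  calc ∑ i ∈ range (j + 1), n.choose (j - i) = ∑ i ∈ range (j + 1), n.choose i := by
        simpa using sum_range_reflect n.choose (j + 1)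
    _ ≤ ∑ i ∈ range (n + 1), n.choose i :=
        sum_le_sum_of_ne_zero fun i _ hi =>
          mem_range.2 (Nat.lt_succ_of_le (not_lt.1 (mt Nat.choose_eq_zero_of_lt hi)))
    _ = 2 ^ n := Nat.sum_range_choose n

theorem abs_T_le_sum (j r : ℕ) :
    |T j r| ≤ ∑ i ∈ range (j + 1), (r.choose (j - i) : ℝ) / i ! := by
  refine (abs_sum_le_sum_abs _ _).trans (le_of_eq (sum_congr rfl fun i _ => ?_))
  simp [abs_div]

theorem abs_T_le_two_pow (j r : ℕ) : |T j r| ≤ 2 ^ r :=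
  calc |T j r| ≤ ∑ i ∈ range (j + 1), (r.choose (j - i) : ℝ) / i ! := abs_T_le_sum j r
    _ ≤ ∑ i ∈ range (j + 1), (r.choose (j - i) : ℝ) :=
        sum_le_sum fun i _ => div_le_self (Nat.cast_nonneg _) (Nat.one_le_cast.2 i.factorial_pos)
    _ ≤ 2 ^ r := by exact_mod_cast Nat.sum_range_choose_sub_le r j

theorem abs_T_div_factorial_le {j r : ℕ} (hrj : r ≤ j) :
    |T j r| / r ! ≤ 2 ^ r / ((j / 2)! : ℝ) ^ 2 := by
  have hterm (i : ℕ) :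
      (r.choose (j - i) : ℝ) / (i ! * r !) ≤ r.choose (j - i) / ((j / 2)! : ℝ) ^ 2 := by
    by_cases hchoose : r.choose (j - i) = 0
    · simp [hchoose]
    · exact div_le_div_of_nonneg_left (by positivity) (by positivity)
        (by exact_mod_cast Nat.factorial_div_two_sq_le_of_choose_sub_ne_zero hrj hchoose)
  calc |T j r| / r ! ≤ (∑ i ∈ range (j + 1), (r.choose (j - i) : ℝ) / i !) / r ! := by
        gcongr
        exact abs_T_le_sum j r
    _ = ∑ i ∈ range (j + 1), (r.choose (j - i) : ℝ) / (i ! * r !) := by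
        simp only [sum_div, div_div]
    _ ≤ ∑ i ∈ range (j + 1), (r.choose (j - i) : ℝ) / ((j / 2)! : ℝ) ^ 2 :=
        sum_le_sum fun i _ => hterm i
    _ = (∑ i ∈ range (j + 1), (r.choose (j - i) : ℝ)) / ((j / 2)! : ℝ) ^ 2 := (sum_div ..).symm
    _ ≤ 2 ^ r / ((j / 2)! : ℝ) ^ 2 := by
        gcongr
        exact_mod_cast Nat.sum_range_choose_sub_le r j

theorem T_bounds_general (j r : ℕ) :
    (j ≤ r → |T j r| ≤ (2 : ℝ) ^ r) ∧
    (r ≤ j → |T j r| / (r.factorial : ℝ) ≤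
      (2 : ℝ) ^ r / ((j / 2).factorial : ℝ) ^ 2) :=
  ⟨fun _ => abs_T_le_two_pow j r, abs_T_div_factorial_le⟩

/-- Bounds on `T_j(r)`: if `r ≥ j` then `|T_j(r)| ≤ 2^r`, and if `r ≤ j` then
`|T_j(r)|/r! ≤ 2^r/(⌊j/2⌋!)²`. -/
theorem T_bounds (j r : ℕ) (hj : 1 ≤ j) :
    (j ≤ r → |T j r| ≤ (2 : ℝ) ^ r) ∧
    (r ≤ j → |T j r| / (r.factorial : ℝ) ≤
      (2 : ℝ) ^ r / ((j / 2).factorial : ℝ) ^ 2) :=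
  T_bounds_general j r
end

section
/- Let c ∈ ℝ and N ∈ ℕ. Then the series ∑_{j=1}^{∞} e^{−2jc}·T_j(N) converges absolutely and ∑_{j=1}^{∞} e^{−2jc}·T_j(N) = e^{−e^{−2c}}·(1 + e^{−2c})^N − 1. -/
open Finset

/-! The generating function `∑ₙ xⁿ T_n(N)` is the Cauchy product of the exponential series of
`e^{-x}` with the (finite) binomial series of `(1 + x)^N`; both converge absolutely, hence so does
the product, and its sum is `e^{-x} (1 + x)^N`. Specialise to `x = e^{-2c}` and drop the term
`T_0(N) = 1`. -/

lemma choose_mul_pow_eq_zero_of_lt {N k : ℕ} (h : N < k) (x : ℝ) :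
    (N.choose k : ℝ) * x ^ k = 0 := by
  simp [Nat.choose_eq_zero_of_lt h]

lemma hasSum_choose_mul_pow (N : ℕ) (x : ℝ) :
    HasSum (fun k => (N.choose k : ℝ) * x ^ k) ((1 + x) ^ N) := by
  have hbinom : (1 + x) ^ N = ∑ k ∈ range (N + 1), (N.choose k : ℝ) * x ^ k := by
    rw [add_comm, add_pow]
    exact sum_congr rfl fun k _ => by ring
  exact hbinom ▸ hasSum_sum_of_ne_finset_zero fun k hk =>
    choose_mul_pow_eq_zero_of_lt (by simpa using hk) x

lemma summable_norm_choose_mul_pow (N : ℕ) (x : ℝ) :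
    Summable fun k => ‖(N.choose k : ℝ) * x ^ k‖ :=
  summable_of_ne_finset_zero (s := range (N + 1)) fun k hk => by
    rw [choose_mul_pow_eq_zero_of_lt (by simpa using hk), norm_zero]

lemma summable_norm_pow_div_factorial (x : ℝ) :
    Summable fun i => ‖x ^ i / (i.factorial : ℝ)‖ := by
  simpa [abs_div, abs_pow] using Real.summable_pow_div_factorial |x|

lemma pow_mul_T_eq_sum_range (x : ℝ) (n N : ℕ) :
    x ^ n * T n N =
      ∑ i ∈ range (n + 1), (-x) ^ i / (i.factorial : ℝ) * ((N.choose (n - i) : ℝ) * x ^ (n - i)) := by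
  rw [T, mul_sum]
  refine sum_congr rfl fun i hi => ?_
  rw [← pow_sub_mul_pow x (Nat.le_of_lt_succ (mem_range.mp hi)), neg_pow]
  ring

theorem summable_norm_pow_mul_T (x : ℝ) (N : ℕ) : Summable fun n => ‖x ^ n * T n N‖ := by
  simpa only [pow_mul_T_eq_sum_range] using summable_norm_sum_mul_range_of_summable_norm
    (summable_norm_pow_div_factorial (-x)) (summable_norm_choose_mul_pow N x)

theorem tsum_pow_mul_T (x : ℝ) (N : ℕ) :
    ∑' n, x ^ n * T n N = Real.exp (-x) * (1 + x) ^ N := by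
  have hexp : ∑' i, (-x) ^ i / (i.factorial : ℝ) = Real.exp (-x) := by
    rw [Real.exp_eq_exp_ℝ]
    exact (NormedSpace.expSeries_div_hasSum_exp (-x)).tsum_eq
  simp only [pow_mul_T_eq_sum_range]
  rw [← tsum_mul_tsum_eq_tsum_sum_range_of_summable_norm (summable_norm_pow_div_factorial (-x))
    (summable_norm_choose_mul_pow N x), hexp, (hasSum_choose_mul_pow N x).tsum_eq]

/-- For every `c ∈ ℝ` and `N ∈ ℕ`, the series `∑_{j≥1} e^{−2jc}·T_j(N)` converges
absolutely and equals `e^{−e^{−2c}}·(1 + e^{−2c})^N − 1`. -/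
theorem T_series_sum (c : ℝ) (N : ℕ) :
    (Summable fun j : ℕ => |Real.exp (-2 * ((j : ℝ) + 1) * c) * T (j + 1) N|) ∧
    ∑' j : ℕ, Real.exp (-2 * ((j : ℝ) + 1) * c) * T (j + 1) N =
      Real.exp (-Real.exp (-2 * c)) * (1 + Real.exp (-2 * c)) ^ N - 1 := by
  set x := Real.exp (-2 * c)
  have hexp (j : ℕ) : Real.exp (-2 * ((j : ℝ) + 1) * c) = x ^ (j + 1) := by
    rw [← Real.exp_nat_mul]
    push_cast
    ring_nf
  simp only [hexp, ← Real.norm_eq_abs]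
  have hsum := summable_norm_pow_mul_T x N
  refine ⟨(summable_nat_add_iff 1).mpr hsum, ?_⟩
  have hT0 : T 0 N = 1 := by simp [T]
  rw [← tsum_pow_mul_T, hsum.of_norm.tsum_eq_zero_add, hT0]
  ring
end

section
/- Fix c ∈ ℝ and define f_c : ℕ → ℝ by f_c(x) = e^{−e^{−2c}}·(1 + e^{−2c})^x − 1. Then, as n → ∞, (1/n!)·∑_{σ ∈ S_n} |f_c(Fix(σ))| converges to 𝔼|f_c(Poiss(1))| = ∑_{r=0}^{∞} (e^{−1}/r!)·|f_c(r)|. -/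
open Finset

/-!
A permutation with fixed-point set `S` is a derangement of the complement of `S`, so exactly
`C(n, r) · D(n - r)` permutations of `Fin n` have `r` fixed points, and the probability of this
event is `(D(n - r) / (n - r)!) / r!`. It is at most `1 / r!` and tends to `e⁻¹ / r!` because
`D(m) / m! → e⁻¹`. Averaging `g (fixCount σ)` is summing `g r` against these probabilities, so
Tannery's theorem, with the dominating series `∑ |g r| / r!`, gives the limit as soon as
`∑ g r / r!` converges; for `f_c` this series is a combination of two exponential series.
-/

open Equiv Filter Topology Nat

theorem card_filter_fixedPoints_eq {α : Type*} [Fintype α] [DecidableEq α] (S : Finset α) :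
    #{σ : Perm α | ({x | σ x = x} : Finset α) = S} = numDerangements (Fintype.card α - #S) := by
  have e : {σ : Perm α // ({x | σ x = x} : Finset α) = S} ≃ derangements {a // a ∉ S} :=
    (subtypeEquivRight fun σ => by
      simp [Finset.ext_iff, Function.mem_fixedPoints, Function.IsFixedPt, Iff.comm]).trans
      (derangements.subtypeEquiv (· ∉ S)).symm
  rw [← Fintype.card_subtype, Fintype.card_congr e, card_derangements_eq_numDerangements,
    Fintype.card_subtype_compl, Fintype.card_coe]

theorem card_filter_fixCount_eq (n r : ℕ) :
    #{σ : Perm (Fin n) | fixCount σ = r} = n.choose r * numDerangements (n - r) := by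
  have hmaps : ∀ σ ∈ ({σ : Perm (Fin n) | fixCount σ = r} : Finset _),
      ({x | σ x = x} : Finset (Fin n)) ∈ powersetCard r univ := fun σ hσ =>
    mem_powersetCard_univ.2 (mem_filter.1 hσ).2
  rw [card_eq_sum_card_fiberwise hmaps]
  calc ∑ S ∈ powersetCard r univ,
        #{σ ∈ {σ : Perm (Fin n) | fixCount σ = r} | ({x | σ x = x} : Finset (Fin n)) = S}
      = ∑ S ∈ powersetCard r (univ : Finset (Fin n)), numDerangements (n - r) := by
        refine sum_congr rfl fun S hS => ?_
        have hSr : #S = r := mem_powersetCard_univ.1 hS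
        have hfiber := card_filter_fixedPoints_eq S
        rw [Fintype.card_fin, hSr] at hfiber
        rw [filter_filter, ← hfiber]
        congr 1
        exact filter_congr fun σ _ => and_iff_right_of_imp fun h => by rw [fixCount, h, hSr]
    _ = n.choose r * numDerangements (n - r) := by
        rw [sum_const, card_powersetCard, Finset.card_univ, Fintype.card_fin, smul_eq_mul]

theorem numDerangements_le_factorial (n : ℕ) : numDerangements n ≤ n ! := by
  rw [← card_derangements_fin_eq_numDerangements]
  simpa [Fintype.card_perm] using Fintype.card_subtype_le (· ∈ derangements (Fin n))

noncomputable def fixCountProb (n r : ℕ) : ℝ := #{σ : Perm (Fin n) | fixCount σ = r} / n !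

theorem fixCountProb_nonneg (n r : ℕ) : 0 ≤ fixCountProb n r := by
  unfold fixCountProb
  positivity

theorem fixCountProb_eq_zero_of_lt {n r : ℕ} (h : n < r) : fixCountProb n r = 0 := by
  simp [fixCountProb, card_filter_fixCount_eq, Nat.choose_eq_zero_of_lt h]

theorem fixCountProb_eq_of_le {n r : ℕ} (h : r ≤ n) :
    fixCountProb n r = numDerangements (n - r) / (n - r)! / r ! := by
  have hfac : (n.choose r : ℝ) * r ! * (n - r)! = n ! := by
    exact_mod_cast Nat.choose_mul_factorial_mul_factorial h
  have hchoose : (n.choose r : ℝ) ≠ 0 := by exact_mod_cast (Nat.choose_pos h).ne'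
  rw [fixCountProb, card_filter_fixCount_eq, ← hfac]
  push_cast
  field_simp

theorem fixCountProb_le_inv_factorial (n r : ℕ) : fixCountProb n r ≤ (r ! : ℝ)⁻¹ := by
  rcases lt_or_ge n r with h | h
  · rw [fixCountProb_eq_zero_of_lt h]
    positivity
  · rw [fixCountProb_eq_of_le h, div_eq_mul_inv _ (r ! : ℝ)]
    refine mul_le_of_le_one_left (by positivity) ?_
    rw [div_le_one (by positivity)]
    exact_mod_cast numDerangements_le_factorial (n - r)

theorem tendsto_fixCountProb (r : ℕ) :
    Tendsto (fixCountProb · r) atTop (𝓝 (Real.exp (-1) / r !)) := by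
  refine ((numDerangements_tendsto_inv_e.comp (tendsto_sub_atTop_nat r)).div_const _).congr' ?_
  filter_upwards [eventually_ge_atTop r] with n hn
  exact (fixCountProb_eq_of_le hn).symm

theorem average_eq_tsum_fixCountProb (g : ℕ → ℝ) (n : ℕ) :
    1 / (n ! : ℝ) * ∑ σ : Perm (Fin n), g (fixCount σ) = ∑' r, fixCountProb n r * g r := by
  have hmaps : ∀ σ ∈ (univ : Finset (Perm (Fin n))), fixCount σ ∈ range (n + 1) := fun σ _ =>
    mem_range_succ_iff.2 <| (card_filter_le _ _).trans_eq (card_fin n)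
  rw [tsum_eq_sum fun r (hr : r ∉ range (n + 1)) => by
    rw [fixCountProb_eq_zero_of_lt (by simpa using hr), zero_mul]]
  rw [← sum_fiberwise_of_maps_to hmaps, mul_sum]
  refine sum_congr rfl fun r _ => ?_
  rw [sum_congr rfl fun σ hσ => by rw [(mem_filter.1 hσ).2], sum_const, nsmul_eq_mul,
    fixCountProb]
  ring

theorem tendsto_average_fixCount (g : ℕ → ℝ) (hg : Summable fun r => g r / r !) :
    Tendsto (fun n => 1 / (n ! : ℝ) * ∑ σ : Perm (Fin n), g (fixCount σ)) atTop
      (𝓝 (∑' r, Real.exp (-1) / r ! * g r)) := by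
  simp_rw [average_eq_tsum_fixCountProb]
  refine tendsto_tsum_of_dominated_convergence hg.abs
    (fun r => (tendsto_fixCountProb r).mul_const (g r)) (.of_forall fun n r => ?_)
  rw [Real.norm_eq_abs, abs_mul, abs_of_nonneg (fixCountProb_nonneg n r), abs_div, Nat.abs_cast,
    div_eq_inv_mul]
  exact mul_le_mul_of_nonneg_right (fixCountProb_le_inv_factorial n r) (abs_nonneg _)

/-- With `f_c(x) = e^{−e^{−2c}}·(1 + e^{−2c})^x − 1`, the average of `|f_c(Fix σ)|`
over `S_n` converges, as `n → ∞`, to the expectation `𝔼|f_c(Poiss(1))|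
= ∑_{r≥0} (e^{−1}/r!)·|f_c(r)|`. -/
theorem fixed_points_poisson_limit (c : ℝ) :
    Filter.Tendsto
      (fun n : ℕ =>
        (1 / (n.factorial : ℝ)) * ∑ σ : Equiv.Perm (Fin n),
          |Real.exp (-Real.exp (-2 * c)) * (1 + Real.exp (-2 * c)) ^ (fixCount σ) - 1|)
      Filter.atTop
      (nhds (∑' r : ℕ, Real.exp (-1) / (r.factorial : ℝ) *
        |Real.exp (-Real.exp (-2 * c)) * (1 + Real.exp (-2 * c)) ^ r - 1|)) := by
  set a := Real.exp (-Real.exp (-2 * c))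
  set x := 1 + Real.exp (-2 * c)
  have hsum : Summable fun r : ℕ => (a * x ^ r - 1) / r ! := by
    simp_rw [sub_div, mul_div_assoc]
    exact ((Real.summable_pow_div_factorial x).mul_left a).sub
      (by simpa using Real.summable_pow_div_factorial 1)
  exact tendsto_average_fixCount (fun r => |a * x ^ r - 1|) <| by
    simpa only [abs_div, Nat.abs_cast] using hsum.abs
end
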